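/- arXiv:2006.15825 — 3 statements merged into one kernel-verified Lean document; each statement's English description precedes it below -/
import Mathlib

section
/- Let Δ ⊂ ℝ^d be a d-dimensional canonical Fano polytope and let Δ* := {y ∈ ℝ^d : ⟨x,y⟩ ≥ −1 for all x ∈ Δ} be its dual polytope. Then the Fine interior F(Δ) equals {0} if and only if [Δ*] := conv(Δ* ∩ ℤ^d) is also a d-dimensional canonical Fano polytope, i.e. the affine span of [Δ*] is ℝ^d and 0 is the unique point of ℤ^d lying in the interior of [Δ*]. (Proposition 4.6.) -/
/-- `x ∈ ℝ^d` is a lattice point, i.e. all its coordinates are integers. -/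
def IsLatticePt {d : ℕ} (x : Fin d → ℝ) : Prop := ∀ i, ∃ m : ℤ, x i = (m : ℝ)

/-- The standard inner product on `ℝ^d`. -/
noncomputable def dotR {d : ℕ} (x y : Fin d → ℝ) : ℝ := ∑ i, x i * y i

/-- `ord_Δ(n) = min_{x ∈ Δ} ⟨x, n⟩`. -/
noncomputable def ordP {d : ℕ} (Δ : Set (Fin d → ℝ)) (n : Fin d → ℝ) : ℝ :=
  sInf ((fun x => dotR x n) '' Δ)

/-- The Fine interior of `Δ`:
`F(Δ) = {x : ⟨x,n⟩ ≥ ord_Δ(n) + 1 for all n ∈ ℤ^d ∖ {0}}`. -/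
def fineInterior {d : ℕ} (Δ : Set (Fin d → ℝ)) : Set (Fin d → ℝ) :=
  {x | ∀ n : Fin d → ℤ, n ≠ 0 →
    ordP Δ (fun i => (n i : ℝ)) + 1 ≤ dotR x (fun i => (n i : ℝ))}

/-- `Δ ⊂ ℝ^d` is a `d`-dimensional canonical Fano polytope: it is the convex hull of a
finite set of lattice points, its affine span is all of `ℝ^d`, `0` lies in its interior,
and `0` is the only lattice point in its interior. -/
def IsCanonicalFano {d : ℕ} (Δ : Set (Fin d → ℝ)) : Prop :=
  (∃ S : Finset (Fin d → ℤ),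
      Δ = convexHull ℝ ((fun z : Fin d → ℤ => fun i => (z i : ℝ)) '' (S : Set (Fin d → ℤ)))) ∧
  affineSpan ℝ Δ = ⊤ ∧
  (0 : Fin d → ℝ) ∈ interior Δ ∧
  ∀ x ∈ interior Δ, IsLatticePt x → x = 0

/-!
Write `[Δ*]` for the convex hull of `Δ* ∩ ℤ^d`. As `0` is interior to the lattice polytope `Δ`,
`ord_Δ(n)` is a negative integer for every nonzero `n ∈ ℤ^d`, so `ord_Δ(n) ≤ -1`, with
`ord_Δ(n) ≤ -2` exactly when `n ∉ Δ*`; in particular `0 ∈ F(Δ)`. A nonzero lattice point `x`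
interior to `[Δ*]` would have `(1 + t) x ∈ Δ*` for some `t > 0`, which contradicts
`ord_Δ(x) ≤ -1`. If `0` is interior to `[Δ*]`, each `x ∈ F(Δ)` satisfies
`⟨x, y⟩ ≥ ord_Δ(y) + 1 ≥ 0` on `Δ* ∩ ℤ^d`, hence near `0`, so `x = 0`. If it is not, a
supporting functional `u ≤ 0` of `[Δ*]` at `0` yields `-t u ∈ F(Δ)` for small `t > 0`: the
inequalities for `n ∈ Δ*` hold trivially, and for `n ∉ Δ*` the slack
`ord_Δ(n) + 1 ≤ ord_Δ(n) / 2 ≤ -c ‖n‖₁` absorbs `t |⟨u, n⟩|`.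
-/

open Set Filter Topology Matrix

theorem exists_pos_add_smul_mem_of_mem_nhds {E : Type*} [AddCommGroup E] [Module ℝ E]
    [TopologicalSpace E] [ContinuousAdd E] [ContinuousSMul ℝ E] {C : Set E} {x : E}
    (hC : C ∈ 𝓝 x) (v : E) : ∃ t : ℝ, 0 < t ∧ x + t • v ∈ C := by
  have hcont : Tendsto (fun t : ℝ => x + t • v) (𝓝[>] 0) (𝓝 x) :=
    ((continuous_const.add (continuous_id.smul continuous_const)).tendsto' 0 x
      (by simp)).mono_left nhdsWithin_le_nhds
  obtain ⟨t, htC, ht⟩ := ((hcont.eventually_mem hC).and self_mem_nhdsWithin).exists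
  exact ⟨t, ht, htC⟩

theorem exists_dual_ne_zero_forall_le_of_notMem_interior {E : Type*} [NormedAddCommGroup E]
    [NormedSpace ℝ E] [FiniteDimensional ℝ E] {A : Set E} {x : E}
    (hA : Convex ℝ A) (hx : x ∈ A) (hxA : x ∉ interior A) :
    ∃ f : Module.Dual ℝ E, f ≠ 0 ∧ ∀ a ∈ A, f a ≤ f x := by
  rcases (interior A).eq_empty_or_nonempty with hint | hint
  · -- `A` lies in a proper affine subspace; take a functional vanishing on its direction.
    have hspan : vectorSpan ℝ A < ⊤ := by
      rw [lt_top_iff_ne_top, Ne,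
        ← AffineSubspace.affineSpan_eq_top_iff_vectorSpan_eq_top_of_nonempty ℝ E E ⟨x, hx⟩,
        ← hA.interior_nonempty_iff_affineSpan_eq_top, hint]
      exact not_nonempty_empty
    obtain ⟨f, hf0, hf⟩ := Submodule.exists_dual_map_eq_bot_of_lt_top hspan inferInstance
    refine ⟨f, hf0, fun a ha => le_of_eq ?_⟩
    have hax : f (a -ᵥ x) ∈ (vectorSpan ℝ A).map f :=
      Submodule.mem_map_of_mem (vsub_mem_vectorSpan ℝ ha hx)
    rwa [hf, Submodule.mem_bot, vsub_eq_sub, map_sub, sub_eq_zero] at hax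
  · obtain ⟨f, hf0, hf⟩ := geometric_hahn_banach_of_nonempty_interior_point hA hxA hint
    exact ⟨f.toLinearMap, fun h => hf0 (ContinuousLinearMap.coe_injective h), hf⟩

variable {d : ℕ}

theorem dotR_eq_dotProduct (x y : Fin d → ℝ) : dotR x y = x ⬝ᵥ y := rfl

theorem dotR_comm (x y : Fin d → ℝ) : dotR x y = dotR y x := dotProduct_comm x y

theorem dotR_intCast (z n : Fin d → ℤ) :
    dotR (fun i => (z i : ℝ)) (fun i => (n i : ℝ)) = ((z ⬝ᵥ n : ℤ) : ℝ) := by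
  simp [dotR, dotProduct]

theorem abs_dotR_le_norm_mul_sum_abs (u n : Fin d → ℝ) : |dotR u n| ≤ ‖u‖ * ∑ i, |n i| := by
  rw [Finset.mul_sum]
  refine (Finset.abs_sum_le_sum_abs _ _).trans (Finset.sum_le_sum fun i _ => ?_)
  rw [abs_mul]
  exact mul_le_mul_of_nonneg_right (norm_le_pi_norm u i) (abs_nonneg _)

theorem le_dotR_of_mem_convexHull {A : Set (Fin d → ℝ)} {c : ℝ} {n z : Fin d → ℝ}
    (h : ∀ a ∈ A, c ≤ dotR a n) (hz : z ∈ convexHull ℝ A) : c ≤ dotR z n := by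
  have hlin : IsLinearMap ℝ (fun x : Fin d → ℝ => dotR x n) :=
    ⟨fun x y => add_dotProduct x y n, fun r x => smul_dotProduct r x n⟩
  exact convexHull_min h (convex_halfSpace_ge hlin c) hz

theorem eq_zero_of_forall_dotR_nonneg {C : Set (Fin d → ℝ)} {x : Fin d → ℝ} (hC : C ∈ 𝓝 0)
    (h : ∀ y ∈ C, 0 ≤ dotR y x) : x = 0 := by
  obtain ⟨t, ht, htC⟩ := exists_pos_add_smul_mem_of_mem_nhds hC (-x)
  have hxx := h _ htC
  rw [zero_add, dotR_eq_dotProduct, smul_dotProduct, neg_dotProduct, smul_eq_mul] at hxx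
  exact dotProduct_self_eq_zero.1 <|
    le_antisymm (by nlinarith) (Fintype.sum_nonneg fun i => mul_self_nonneg (x i))

theorem IsLatticePt.exists_intCast {x : Fin d → ℝ} (hx : IsLatticePt x) :
    ∃ k : Fin d → ℤ, x = fun i => (k i : ℝ) := by
  choose k hk using hx
  exact ⟨k, funext hk⟩

theorem le_ordP {Δ : Set (Fin d → ℝ)} {c : ℝ} {n : Fin d → ℝ} (hne : Δ.Nonempty)
    (h : ∀ x ∈ Δ, c ≤ dotR x n) : c ≤ ordP Δ n :=
  le_csInf (hne.image _) (forall_mem_image.2 h)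

def latticePolytope (S : Finset (Fin d → ℤ)) : Set (Fin d → ℝ) :=
  convexHull ℝ ((fun z : Fin d → ℤ => fun i => (z i : ℝ)) '' (S : Set (Fin d → ℤ)))

/-- `Δ* ∩ ℤ^d`; its convex hull is `[Δ*]`. -/
def dualLatticePoints (Δ : Set (Fin d → ℝ)) : Set (Fin d → ℝ) :=
  {y | (∀ x ∈ Δ, -1 ≤ dotR x y) ∧ IsLatticePt y}

section LatticePolytope

variable {S : Finset (Fin d → ℤ)} {Δ : Set (Fin d → ℝ)}

theorem exists_mem_isLeast_dotR_image (hS : Δ = latticePolytope S) (hne : Δ.Nonempty)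
    (n : Fin d → ℝ) :
    ∃ z ∈ S, IsLeast ((fun x => dotR x n) '' Δ) (dotR (fun i => (z i : ℝ)) n) := by
  have hSne : S.Nonempty := by
    rw [← Finset.coe_nonempty]
    simpa [hS, latticePolytope] using hne
  obtain ⟨z, hz, hmin⟩ := S.exists_min_image (fun z => dotR (fun i => (z i : ℝ)) n) hSne
  refine ⟨z, hz, ⟨_, ?_, rfl⟩, forall_mem_image.2 fun x hx => ?_⟩
  · rw [hS]
    exact subset_convexHull ℝ _ ⟨z, hz, rfl⟩
  · rw [hS] at hx
    exact le_dotR_of_mem_convexHull (forall_mem_image.2 hmin) hx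

theorem exists_mem_dotR_eq_ordP (hS : Δ = latticePolytope S) (hne : Δ.Nonempty)
    (n : Fin d → ℝ) : ∃ x ∈ Δ, dotR x n = ordP Δ n := by
  obtain ⟨z, -, hz⟩ := exists_mem_isLeast_dotR_image hS hne n
  obtain ⟨x, hx, hxz⟩ := hz.1
  exact ⟨x, hx, by rw [ordP, hz.csInf_eq]; exact hxz⟩

theorem ordP_le_dotR (hS : Δ = latticePolytope S) {x : Fin d → ℝ} (hx : x ∈ Δ)
    (n : Fin d → ℝ) : ordP Δ n ≤ dotR x n := by
  obtain ⟨z, -, hz⟩ := exists_mem_isLeast_dotR_image hS ⟨x, hx⟩ n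
  exact csInf_le hz.bddBelow (mem_image_of_mem _ hx)

theorem exists_ordP_eq_intCast (hS : Δ = latticePolytope S) (hne : Δ.Nonempty)
    (n : Fin d → ℤ) : ∃ m : ℤ, ordP Δ (fun i => (n i : ℝ)) = m := by
  obtain ⟨z, -, hz⟩ := exists_mem_isLeast_dotR_image hS hne (fun i => (n i : ℝ))
  exact ⟨z ⬝ᵥ n, by rw [ordP, hz.csInf_eq, dotR_intCast]⟩

theorem ordP_le_intCast_of_lt_add_one (hS : Δ = latticePolytope S) (hne : Δ.Nonempty)
    {n : Fin d → ℤ} {a : ℤ} (h : ordP Δ (fun i => (n i : ℝ)) < a + 1) :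
    ordP Δ (fun i => (n i : ℝ)) ≤ a := by
  obtain ⟨m, hm⟩ := exists_ordP_eq_intCast hS hne n
  rw [hm] at h ⊢
  exact_mod_cast Int.lt_add_one_iff.1 (by exact_mod_cast h)

theorem exists_pos_ordP_le_neg_mul_sum_abs (hS : Δ = latticePolytope S)
    (h0 : (0 : Fin d → ℝ) ∈ interior Δ) :
    ∃ c > 0, ∀ n : Fin d → ℝ, ordP Δ n ≤ -c * ∑ i, |n i| := by
  obtain ⟨ε, hε, hball⟩ := Metric.mem_nhds_iff.1 (mem_interior_iff_mem_nhds.1 h0)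
  refine ⟨ε / 2, half_pos hε, fun n => ?_⟩
  set v : Fin d → ℝ := fun i => -(ε / 2) * SignType.sign (n i)
  have hv : v ∈ Δ := by
    refine hball (mem_ball_zero_iff.2 (lt_of_le_of_lt ?_ (half_lt_self hε)))
    refine (pi_norm_le_iff_of_nonneg (half_pos hε).le).2 fun i => ?_
    rw [Real.norm_eq_abs, abs_mul, abs_neg, abs_of_pos (half_pos hε)]
    refine mul_le_of_le_one_right (half_pos hε).le ?_
    cases SignType.sign (n i) <;> simp
  calc ordP Δ n ≤ dotR v n := ordP_le_dotR hS hv n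
    _ = -(ε / 2) * ∑ i, |n i| := by
      simp only [dotR, v, Finset.mul_sum, mul_assoc, sign_mul_self]

theorem ordP_le_neg_one (hS : Δ = latticePolytope S) (h0 : (0 : Fin d → ℝ) ∈ interior Δ)
    {n : Fin d → ℤ} (hn : n ≠ 0) : ordP Δ (fun i => (n i : ℝ)) ≤ -1 := by
  obtain ⟨c, hc, hord⟩ := exists_pos_ordP_le_neg_mul_sum_abs hS h0
  have hsum : 0 < ∑ i, |(n i : ℝ)| := by
    obtain ⟨i, hi⟩ := Function.ne_iff.1 hn
    exact Finset.sum_pos' (fun i _ => abs_nonneg _) ⟨i, Finset.mem_univ _, by simpa using hi⟩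
  have hneg : ordP Δ (fun i => (n i : ℝ)) < ((-1 : ℤ) : ℝ) + 1 := by
    calc ordP Δ (fun i => (n i : ℝ)) ≤ -c * ∑ i, |(n i : ℝ)| := hord _
      _ < ((-1 : ℤ) : ℝ) + 1 := by
        rw [neg_mul]
        simpa using mul_pos hc hsum
  exact_mod_cast ordP_le_intCast_of_lt_add_one hS ⟨0, interior_subset h0⟩ hneg

theorem zero_mem_fineInterior (hS : Δ = latticePolytope S)
    (h0 : (0 : Fin d → ℝ) ∈ interior Δ) : (0 : Fin d → ℝ) ∈ fineInterior Δ := fun n hn => by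
  rw [dotR_eq_dotProduct, zero_dotProduct]
  linarith [ordP_le_neg_one hS h0 hn]

theorem neg_one_le_dotR_of_mem_convexHull_dualLatticePoints {x y : Fin d → ℝ} (hx : x ∈ Δ)
    (hy : y ∈ convexHull ℝ (dualLatticePoints Δ)) : -1 ≤ dotR x y := by
  rw [dotR_comm]
  exact le_dotR_of_mem_convexHull (fun a ha => by rw [dotR_comm]; exact ha.1 x hx) hy

theorem eq_zero_of_mem_interior_convexHull_dualLatticePoints (hS : Δ = latticePolytope S)
    (h0 : (0 : Fin d → ℝ) ∈ interior Δ) {x : Fin d → ℝ}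
    (hx : x ∈ interior (convexHull ℝ (dualLatticePoints Δ))) (hlat : IsLatticePt x) :
    x = 0 := by
  obtain ⟨k, rfl⟩ := hlat.exists_intCast
  by_contra hk
  have hk0 : k ≠ 0 := fun h => hk (funext fun i => by simp [h])
  obtain ⟨t, ht, htk⟩ := exists_pos_add_smul_mem_of_mem_nhds (mem_interior_iff_mem_nhds.1 hx)
    (fun i => (k i : ℝ))
  obtain ⟨z, hz, hzk⟩ := exists_mem_dotR_eq_ordP hS ⟨0, interior_subset h0⟩ (fun i => (k i : ℝ))
  have hle := neg_one_le_dotR_of_mem_convexHull_dualLatticePoints hz htk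
  rw [dotR_eq_dotProduct, dotProduct_add, dotProduct_smul, ← dotR_eq_dotProduct, hzk,
    smul_eq_mul] at hle
  nlinarith [ordP_le_neg_one hS h0 hk0]

theorem fineInterior_subset_singleton_zero (hne : Δ.Nonempty)
    (hC : (0 : Fin d → ℝ) ∈ interior (convexHull ℝ (dualLatticePoints Δ))) :
    fineInterior Δ ⊆ {0} := by
  intro x hx
  have hK : ∀ y ∈ dualLatticePoints Δ, 0 ≤ dotR y x := by
    rintro y ⟨hyΔ, hlat⟩
    obtain ⟨k, rfl⟩ := hlat.exists_intCast
    rcases eq_or_ne k 0 with rfl | hk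
    · simp [dotR]
    · rw [dotR_comm]
      linarith [hx k hk, le_ordP hne hyΔ]
  exact eq_zero_of_forall_dotR_nonneg (mem_interior_iff_mem_nhds.1 hC)
    fun y hy => le_dotR_of_mem_convexHull hK hy

theorem exists_ne_zero_mem_fineInterior (hS : Δ = latticePolytope S)
    (h0 : (0 : Fin d → ℝ) ∈ interior Δ) {u : Fin d → ℝ} (hu0 : u ≠ 0)
    (hu : ∀ y ∈ dualLatticePoints Δ, dotR u y ≤ 0) : ∃ x ∈ fineInterior Δ, x ≠ 0 := by
  obtain ⟨c, hc, hord⟩ := exists_pos_ordP_le_neg_mul_sum_abs hS h0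
  have hu' : 0 < ‖u‖ := norm_pos_iff.2 hu0
  set t := c / (2 * ‖u‖) with ht
  have htpos : 0 < t := by positivity
  refine ⟨-t • u, fun n hn => ?_, smul_ne_zero (neg_ne_zero.2 htpos.ne') hu0⟩
  rw [dotR_eq_dotProduct, neg_smul, neg_dotProduct, smul_dotProduct, smul_eq_mul,
    ← dotR_eq_dotProduct]
  set n' : Fin d → ℝ := fun i => (n i : ℝ)
  by_cases hdual : ∀ z ∈ Δ, -1 ≤ dotR z n'
  · have hun := mul_nonpos_of_nonneg_of_nonpos htpos.le (hu n' ⟨hdual, fun i => ⟨n i, rfl⟩⟩)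
    linarith [ordP_le_neg_one hS h0 hn]
  · push Not at hdual
    obtain ⟨z, hz, hzn⟩ := hdual
    have hm2 : ordP Δ n' ≤ ((-2 : ℤ) : ℝ) :=
      ordP_le_intCast_of_lt_add_one hS ⟨z, hz⟩ <| by
        push_cast
        linarith [ordP_le_dotR hS hz n']
    push_cast at hm2
    calc ordP Δ n' + 1 ≤ ordP Δ n' / 2 := by linarith
      _ ≤ -(c / 2) * ∑ i, |n' i| := by linarith [hord n']
      _ = -(t * (‖u‖ * ∑ i, |n' i|)) := by rw [ht]; field_simp
      _ ≤ -(t * dotR u n') := by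
        gcongr
        exact (le_abs_self _).trans (abs_dotR_le_norm_mul_sum_abs u n')

theorem zero_mem_interior_convexHull_dualLatticePoints (hS : Δ = latticePolytope S)
    (h0 : (0 : Fin d → ℝ) ∈ interior Δ) (hF : fineInterior Δ = {0}) :
    (0 : Fin d → ℝ) ∈ interior (convexHull ℝ (dualLatticePoints Δ)) := by
  by_contra h
  have h0K : (0 : Fin d → ℝ) ∈ dualLatticePoints Δ :=
    ⟨fun x _ => by simp [dotR], fun i => ⟨0, by simp⟩⟩
  obtain ⟨f, hf0, hf⟩ := exists_dual_ne_zero_forall_le_of_notMem_interior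
    (convex_convexHull ℝ _) (subset_convexHull ℝ _ h0K) h
  set u := (dotProductEquiv ℝ (Fin d)).symm f
  have hfu : ∀ y, f y = dotR u y := fun y => by
    rw [dotR_eq_dotProduct, ← dotProductEquiv_apply_apply, LinearEquiv.apply_symm_apply]
  have hu0 : u ≠ 0 := (LinearEquiv.map_ne_zero_iff _).2 hf0
  obtain ⟨x, hx, hx0⟩ := exists_ne_zero_mem_fineInterior hS h0 hu0 fun y hy => by
    rw [← hfu, ← map_zero f]
    exact hf y (subset_convexHull ℝ _ hy)
  rw [hF] at hx
  exact hx0 hx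

end LatticePolytope

/-- For a `d`-dimensional canonical Fano polytope `Δ ⊂ ℝ^d` with dual
`Δ* = {y : ⟨x,y⟩ ≥ −1 ∀ x ∈ Δ}`, the Fine interior `F(Δ)` equals `{0}` if and only if
`[Δ*] = conv(Δ* ∩ ℤ^d)` is also a `d`-dimensional canonical Fano polytope, i.e. the
affine span of `[Δ*]` is `ℝ^d` and `0` is the unique lattice point in its interior. -/
theorem stmt_2 {d : ℕ} (Δ : Set (Fin d → ℝ)) (hΔ : IsCanonicalFano Δ) :
    fineInterior Δ = {0} ↔
      (affineSpan ℝ (convexHull ℝ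
          {y : Fin d → ℝ | (∀ x ∈ Δ, -1 ≤ dotR x y) ∧ IsLatticePt y}) = ⊤ ∧
        (0 : Fin d → ℝ) ∈ interior (convexHull ℝ
          {y : Fin d → ℝ | (∀ x ∈ Δ, -1 ≤ dotR x y) ∧ IsLatticePt y}) ∧
        ∀ x ∈ interior (convexHull ℝ
          {y : Fin d → ℝ | (∀ x ∈ Δ, -1 ≤ dotR x y) ∧ IsLatticePt y}),
          IsLatticePt x → x = 0) := by
  obtain ⟨⟨S, hS⟩, -, h0, -⟩ := hΔ
  constructor
  · intro hF
    have h0C := zero_mem_interior_convexHull_dualLatticePoints hS h0 hF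
    exact ⟨(convex_convexHull ℝ _).interior_nonempty_iff_affineSpan_eq_top.1 ⟨0, h0C⟩, h0C,
      fun x hx => eq_zero_of_mem_interior_convexHull_dualLatticePoints hS h0 hx⟩
  · rintro ⟨-, h0C, -⟩
    exact (fineInterior_subset_singleton_zero ⟨0, interior_subset h0⟩ h0C).antisymm
      (singleton_subset_iff.2 (zero_mem_fineInterior hS h0))
end

section
/- Let w̄ = (w_0,…,w_d) be a weight vector and let v_0,…,v_d ∈ ℤ^d generate ℤ^d as an abelian group and satisfy Σ_{i=0}^d w_i v_i = 0; set Δ*_{w̄} := conv(v_0,…,v_d) ⊂ ℝ^d. Then the Fine interior F(Δ*_{w̄}) equals {0} if and only if the weight vector w̄ has the IP-property. (Corollary 4.8.) -/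
/-- The weight vector `w̄` has the IP-property: the convex hull of all tuples
`(u_0,…,u_d)` of nonnegative integers with `Σ w_i u_i = w` is a `d`-dimensional polytope
containing `(1,…,1)` in its relative interior. -/
def HasIP {d : ℕ} (w : Fin (d + 1) → ℕ) : Prop :=
  Module.finrank ℝ (affineSpan ℝ (convexHull ℝ
      {x : Fin (d + 1) → ℝ | ∃ u : Fin (d + 1) → ℕ,
        (∀ i, x i = (u i : ℝ)) ∧ ∑ i, w i * u i = ∑ i, w i})).direction = d ∧
  (fun _ => (1 : ℝ)) ∈ intrinsicInterior ℝ (convexHull ℝ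
      {x : Fin (d + 1) → ℝ | ∃ u : Fin (d + 1) → ℕ,
        (∀ i, x i = (u i : ℝ)) ∧ ∑ i, w i * u i = ∑ i, w i})

open Matrix Function Finset Filter Topology

theorem intrinsicInterior_eq_interior_of_affineSpan_eq_top {𝕜 V P : Type*} [Ring 𝕜]
    [AddCommGroup V] [Module 𝕜 V] [TopologicalSpace P] [AddTorsor V P] {s : Set P}
    (hs : affineSpan 𝕜 s = ⊤) : intrinsicInterior 𝕜 s = interior s := by
  have hval : IsHomeomorph (Subtype.val : affineSpan 𝕜 s → P) :=
    isHomeomorph_iff_isEmbedding_surjective.2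
      ⟨.subtypeVal, fun x => ⟨⟨x, hs ▸ AffineSubspace.mem_top 𝕜 V x⟩, rfl⟩⟩
  simpa [intrinsicInterior] using image_interior_preimage_comp _ hval id s

section Injective

variable {E F : Type*} [NormedAddCommGroup E] [NormedSpace ℝ E] [FiniteDimensional ℝ E]
  [NormedAddCommGroup F] [NormedSpace ℝ F] {φ : E →ᵃ[ℝ] F}

theorem AffineMap.isEmbedding_of_injective (hφ : Injective φ) : Topology.IsEmbedding φ := by
  have hlin := (LinearMap.isClosedEmbedding_of_injective
    (LinearMap.ker_eq_bot.2 ((φ.linear_injective_iff).2 hφ))).isEmbedding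
  rw [φ.decomp]
  exact (Homeomorph.addRight (φ 0)).isEmbedding.comp hlin

theorem AffineMap.intrinsicInterior_image_of_injective (hφ : Injective φ) (s : Set E) :
    intrinsicInterior ℝ (φ '' s) = φ '' intrinsicInterior ℝ s := by
  have hmem (x : affineSpan ℝ s) : φ x ∈ affineSpan ℝ (φ '' s) := by
    rw [← AffineSubspace.map_span]; exact AffineSubspace.mem_map_of_mem φ x.2
  let e : affineSpan ℝ s → affineSpan ℝ (φ '' s) := fun x => ⟨φ x, hmem x⟩
  have he : IsHomeomorph e := by
    refine isHomeomorph_iff_isEmbedding_surjective.2 ⟨?_, ?_⟩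
    · rw [← Topology.IsEmbedding.of_comp_iff .subtypeVal]
      exact (AffineMap.isEmbedding_of_injective hφ).comp .subtypeVal
    · rintro ⟨y, hy⟩
      rw [← AffineSubspace.map_span, AffineSubspace.mem_map] at hy
      obtain ⟨x, hx, rfl⟩ := hy
      exact ⟨⟨x, hx⟩, rfl⟩
  have hcomp : Subtype.val ∘ e = φ ∘ Subtype.val := rfl
  rw [intrinsicInterior, ← image_interior_preimage_comp e he, hcomp, Set.preimage_comp,
    hφ.preimage_image, Set.image_comp]
  rfl

end Injective

theorem AffineMap.finrank_direction_affineSpan_image_of_injective {k V₁ P₁ V₂ P₂ : Type*}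
    [Ring k] [AddCommGroup V₁] [Module k V₁] [AddTorsor V₁ P₁] [AddCommGroup V₂] [Module k V₂]
    [AddTorsor V₂ P₂] {φ : P₁ →ᵃ[k] P₂} (hφ : Injective φ) (s : Set P₁) :
    Module.finrank k (affineSpan k (φ '' s)).direction =
      Module.finrank k (affineSpan k s).direction := by
  rw [← AffineSubspace.map_span, AffineSubspace.map_direction]
  exact (Submodule.equivMapOfInjective _ ((φ.linear_injective_iff).2 hφ) _).finrank_eq.symm

theorem mem_interior_iff_finrank_direction_and_mem_intrinsicInterior {E : Type*}
    [NormedAddCommGroup E] [NormedSpace ℝ E] [FiniteDimensional ℝ E] {s : Set E} {x : E} :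
    x ∈ interior s ↔ Module.finrank ℝ (affineSpan ℝ s).direction = Module.finrank ℝ E ∧
      x ∈ intrinsicInterior ℝ s := by
  constructor
  · intro hx
    have hspan : affineSpan ℝ s = ⊤ :=
      affineSpan_eq_top_of_nonempty_interior ⟨x, interior_mono (subset_convexHull ℝ s) hx⟩
    rw [hspan, AffineSubspace.direction_top, finrank_top,
      intrinsicInterior_eq_interior_of_affineSpan_eq_top hspan]
    exact ⟨rfl, hx⟩
  · rintro ⟨hrank, hx⟩
    have hspan : affineSpan ℝ s = ⊤ := by
      rw [← AffineSubspace.direction_eq_top_iff_of_nonempty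
        ((affineSpan_nonempty ℝ).2 ⟨x, intrinsicInterior_subset hx⟩)]
      exact Submodule.eq_top_of_finrank_eq hrank
    rwa [← intrinsicInterior_eq_interior_of_affineSpan_eq_top hspan]

theorem Module.Dual.eq_zero_of_nonneg_on_nhds {E : Type*} [NormedAddCommGroup E]
    [NormedSpace ℝ E] {f : Module.Dual ℝ E} {K : Set E} (hK : K ∈ 𝓝 0)
    (hf : ∀ y ∈ K, 0 ≤ f y) : f = 0 := by
  ext y
  have hlim : Tendsto (fun t : ℝ => t • y) (𝓝 0) (𝓝 0) := by
    simpa using (tendsto_id (x := 𝓝 (0 : ℝ))).smul_const y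
  obtain ⟨ε, hε, hball⟩ := Metric.eventually_nhds_iff.1 (hlim.eventually hK)
  have hdist : dist (ε / 2) 0 < ε ∧ dist (-(ε / 2)) 0 < ε := by
    simp only [Real.dist_0_eq_abs, abs_neg, abs_of_pos (half_pos hε)]
    constructor <;> linarith
  have hpos := hf _ (hball hdist.1)
  have hneg := hf _ (hball hdist.2)
  simp only [map_smul, smul_eq_mul] at hpos hneg
  simp only [LinearMap.zero_apply]
  nlinarith

theorem zero_mem_interior_convexHull_iff {E : Type*} [NormedAddCommGroup E] [NormedSpace ℝ E]
    [FiniteDimensional ℝ E] {s : Set E} (h0 : (0 : E) ∈ s) :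
    (0 : E) ∈ interior (convexHull ℝ s) ↔
      ∀ f : Module.Dual ℝ E, (∀ y ∈ s, 0 ≤ f y) → f = 0 := by
  constructor
  · intro hint f hf
    have hhull : convexHull ℝ s ⊆ {y | 0 ≤ f y} :=
      convexHull_min hf (convex_halfSpace_ge f.isLinear 0)
    exact Module.Dual.eq_zero_of_nonneg_on_nhds (mem_interior_iff_mem_nhds.1 hint)
      fun y hy => hhull hy
  · intro hdual
    by_contra hnot
    by_cases hne : (interior (convexHull ℝ s)).Nonempty
    · obtain ⟨g, hg, hgle⟩ :=
        geometric_hahn_banach_of_nonempty_interior_point (convex_convexHull ℝ s) hnot hne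
      refine hg (ContinuousLinearMap.coe_injective (neg_eq_zero.1 (hdual _ fun y hy => ?_)))
      simpa using hgle y (subset_convexHull ℝ s hy)
    · have hspan : Submodule.span ℝ s ≠ ⊤ := by
        rw [interior_convexHull_nonempty_iff_affineSpan_eq_top,
          ← AffineSubspace.direction_eq_top_iff_of_nonempty ((affineSpan_nonempty ℝ).2 ⟨0, h0⟩),
          direction_affineSpan, vectorSpan_eq_span_vsub_set_right ℝ h0] at hne
        simpa using hne
      obtain ⟨f, hf, hker⟩ :=
        Submodule.exists_dual_map_eq_bot_of_lt_top (lt_top_iff_ne_top.2 hspan) inferInstance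
      refine hf (hdual f fun y hy => ?_)
      have hfy : f y ∈ (Submodule.span ℝ s).map f :=
        Submodule.mem_map_of_mem (Submodule.subset_span hy)
      rw [hker, Submodule.mem_bot] at hfy
      exact hfy.ge

theorem zero_mem_interior_convexHull_iff_dotProduct {ι : Type*} [Fintype ι] [DecidableEq ι]
    {s : Set (ι → ℝ)} (h0 : (0 : ι → ℝ) ∈ s) :
    (0 : ι → ℝ) ∈ interior (convexHull ℝ s) ↔ ∀ x : ι → ℝ, (∀ y ∈ s, 0 ≤ x ⬝ᵥ y) → x = 0 := by
  rw [zero_mem_interior_convexHull_iff h0, ← (dotProductEquiv ℝ ι).forall_congr_right]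
  simp

section OrderedRing

variable {R ι κ : Type*} [CommRing R] [LinearOrder R] [IsStrictOrderedRing R] [Fintype ι]

theorem abs_le_sum_mul_of_dotProduct_eq_zero {w a : ι → R} {m : R} (hw : ∀ i, 1 ≤ w i)
    (hwa : w ⬝ᵥ a = 0) (hm : ∀ i, -m ≤ a i) (i : ι) : |a i| ≤ (∑ k, w k) * m := by
  have hsum : ∑ k, w k * (a k + m) = (∑ k, w k) * m := by
    simp only [mul_add, sum_add_distrib, sum_mul]
    rw [show ∑ k, w k * a k = w ⬝ᵥ a from rfl, hwa, zero_add]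
  have hterm : w i * (a i + m) ≤ (∑ k, w k) * m := hsum ▸ single_le_sum
    (fun k _ => mul_nonneg ((zero_le_one).trans (hw k)) (neg_le_iff_add_nonneg.1 (hm k))) (mem_univ i)
  have hai : a i + m ≤ w i * (a i + m) :=
    le_mul_of_one_le_left (neg_le_iff_add_nonneg.1 (hm i)) (hw i)
  have hW : 1 ≤ ∑ k, w k := (hw i).trans
    (single_le_sum (fun k _ => (zero_le_one).trans (hw k)) (mem_univ i))
  have hm0 : 0 ≤ m := by nlinarith [hm i]
  rw [abs_le]
  constructor <;> nlinarith [hm i]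

theorem abs_dotProduct_le_of_abs_le (c : ι → R) {a : ι → R} {B : R} (ha : ∀ i, |a i| ≤ B) :
    |c ⬝ᵥ a| ≤ (∑ i, |c i|) * B :=
  calc |c ⬝ᵥ a| ≤ ∑ i, |c i * a i| := abs_sum_le_sum_abs _ _
    _ ≤ ∑ i, |c i| * B := sum_le_sum fun i _ => by
        rw [abs_mul]; exact mul_le_mul_of_nonneg_left (ha i) (abs_nonneg _)
    _ = (∑ i, |c i|) * B := (sum_mul _ _ _).symm

variable [Fintype κ] [DecidableEq κ] {M : Matrix ι κ R} {Z : Matrix κ ι R} {w : ι → R}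

theorem abs_dotProduct_le_of_neg_le_mulVec (hZ : Z * M = 1) (hw : ∀ i, 1 ≤ w i)
    (hwM : w ᵥ* M = 0) (x : κ → R) {y : κ → R} {m : R} (hm : ∀ i, -m ≤ (M *ᵥ y) i) :
    |x ⬝ᵥ y| ≤ (∑ i, |(x ᵥ* Z) i|) * ((∑ i, w i) * m) := by
  have hy : y = Z *ᵥ (M *ᵥ y) := by rw [mulVec_mulVec, hZ, one_mulVec]
  rw [hy, dotProduct_mulVec]
  refine abs_dotProduct_le_of_abs_le _ fun i =>
    abs_le_sum_mul_of_dotProduct_eq_zero hw ?_ hm i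
  rw [dotProduct_mulVec, hwM, zero_dotProduct]

theorem exists_mulVec_neg_of_ne_zero (hZ : Z * M = 1) (hw : ∀ i, 1 ≤ w i) (hwM : w ᵥ* M = 0)
    {n : κ → R} (hn : n ≠ 0) : ∃ i, (M *ᵥ n) i < 0 := by
  by_contra! hnonneg
  refine hn ?_
  have hMn : M *ᵥ n = 0 := funext fun i => abs_nonpos_iff.1 <| by
    simpa using abs_le_sum_mul_of_dotProduct_eq_zero hw
      (by rw [dotProduct_mulVec, hwM, zero_dotProduct]) (m := 0) (by simpa using hnonneg) i
  rw [← one_mulVec n, ← hZ, ← mulVec_mulVec, hMn, mulVec_zero]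

end OrderedRing

theorem Matrix.mulVec_mulVec_eq_self_of_dotProduct_eq_zero {K ι κ : Type*} [Field K]
    [Fintype ι] [DecidableEq ι] [Fintype κ] [DecidableEq κ] {M : Matrix ι κ K} {Z : Matrix κ ι K}
    {w : ι → K} (hZ : Z * M = 1) (hwM : w ᵥ* M = 0) (hw : w ≠ 0)
    (hcard : Fintype.card ι = Fintype.card κ + 1) {a : ι → K} (ha : w ⬝ᵥ a = 0) :
    M *ᵥ (Z *ᵥ a) = a := by
  have hinj : Injective M.mulVecLin := fun y y' h => by
    simpa [mulVec_mulVec, hZ] using congrArg (Z *ᵥ ·) h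
  set f := dotProductEquiv K ι w
  have hle : LinearMap.range M.mulVecLin ≤ LinearMap.ker f := by
    rintro _ ⟨y, rfl⟩
    simp [f, dotProduct_mulVec, hwM]
  have hker : Module.finrank K (LinearMap.ker f) = Fintype.card κ := by
    have hsurj := LinearMap.surjective_of_ne_zero ((dotProductEquiv K ι).map_ne_zero_iff.2 hw)
    have := LinearMap.finrank_range_add_finrank_ker f
    rw [LinearMap.range_eq_top.2 hsurj, finrank_top, Module.finrank_self,
      Module.finrank_fintype_fun_eq_card, hcard] at this
    omega
  have heq := Submodule.eq_of_le_of_finrank_le hle (by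
    rw [hker, LinearMap.finrank_range_of_inj hinj, Module.finrank_fintype_fun_eq_card])
  obtain ⟨y, hy⟩ : a ∈ LinearMap.range M.mulVecLin := heq ▸ (show f a = 0 by simpa [f] using ha)
  rw [← hy, mulVecLin_apply, mulVec_mulVec y Z M, hZ, one_mulVec]

section IntCast

variable {R l m n : Type*} [Ring R] [Fintype m]

theorem Matrix.map_intCast_mulVec (A : Matrix l m ℤ) (y : m → ℤ) :
    A.map ((↑) : ℤ → R) *ᵥ (fun j => (y j : R)) = fun i => ((A *ᵥ y) i : R) :=
  funext fun i => ((Int.castRingHom R).map_mulVec A y i).symm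

theorem Matrix.map_intCast_mul_eq_one [DecidableEq l] {A : Matrix l m ℤ} {B : Matrix m l ℤ}
    (h : A * B = 1) : A.map ((↑) : ℤ → R) * B.map ((↑) : ℤ → R) = 1 := by
  have := (Matrix.map_mul (L := A) (M := B) (f := Int.castRingHom R)).symm
  rw [h] at this
  simpa using this

theorem Matrix.natCast_vecMul_map_eq_zero {x : m → ℕ} {A : Matrix m n ℤ}
    (h : (fun i => (x i : ℤ)) ᵥ* A = 0) : (fun i => (x i : R)) ᵥ* A.map (↑) = 0 := by
  ext j
  simpa [h, Function.comp_def] using ((Int.castRingHom R).map_vecMul A (fun i => (x i : ℤ)) j).symm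

end IntCast

theorem Matrix.exists_mul_eq_one_of_closure_range_eq_top {ι κ : Type*} [Fintype ι]
    [DecidableEq κ] (v : Matrix ι κ ℤ) (h : AddSubgroup.closure (Set.range v) = ⊤) :
    ∃ Z : Matrix κ ι ℤ, Z * v = 1 := by
  have hrow (j : κ) : ∃ c : ι → ℤ, c ᵥ* v = Pi.single j 1 := by
    have hmem : Pi.single j 1 ∈ Submodule.span ℤ (Set.range v) := by
      rw [← Submodule.mem_toAddSubgroup, Submodule.span_int_eq_addSubgroupClosure, h]
      trivial
    obtain ⟨c, hc⟩ := (Submodule.mem_span_range_iff_exists_fun ℤ).1 hmem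
    exact ⟨c, by rwa [vecMul_eq_sum]⟩
  choose Z hZ using hrow
  refine ⟨Matrix.of Z, Matrix.ext fun j k => ?_⟩
  change (Z j ᵥ* v) k = _
  simp [hZ, Pi.single_apply, one_apply, eq_comm]

theorem Matrix.mulVec_mulVec_eq_self_of_natCast_dotProduct_eq_zero {ι κ : Type*} [Fintype ι]
    [DecidableEq ι] [Fintype κ] [DecidableEq κ] {M : Matrix ι κ ℤ} {Z : Matrix κ ι ℤ}
    {w : ι → ℕ} (hZ : Z * M = 1) (hwM : (fun i => (w i : ℤ)) ᵥ* M = 0) (hw : w ≠ 0)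
    (hcard : Fintype.card ι = Fintype.card κ + 1) {a : ι → ℤ}
    (ha : (fun i => (w i : ℤ)) ⬝ᵥ a = 0) : M *ᵥ (Z *ᵥ a) = a := by
  have hwℝ : (fun i => (w i : ℝ)) ≠ 0 := fun h => hw (funext fun i => by simpa using congrFun h i)
  have hreal := mulVec_mulVec_eq_self_of_dotProduct_eq_zero (map_intCast_mul_eq_one hZ)
    (natCast_vecMul_map_eq_zero hwM) hwℝ hcard (a := fun i => (a i : ℝ))
    (by simpa [dotProduct] using congrArg (Int.cast : ℤ → ℝ) ha)
  rw [map_intCast_mulVec, map_intCast_mulVec] at hreal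
  exact funext fun i => by exact_mod_cast congrFun hreal i

theorem ordP_convexHull_range {d : ℕ} {ι : Type*} [Fintype ι] [Nonempty ι]
    (p : ι → Fin d → ℝ) (n : Fin d → ℝ) :
    ordP (convexHull ℝ (Set.range p)) n = univ.inf' univ_nonempty fun i => dotR (p i) n := by
  obtain ⟨i₀, -, hi₀⟩ := exists_mem_eq_inf' univ_nonempty fun i => dotR (p i) n
  refine IsLeast.csInf_eq ⟨⟨p i₀, subset_convexHull ℝ _ ⟨i₀, rfl⟩, hi₀.symm⟩, ?_⟩
  rintro _ ⟨x, hx, rfl⟩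
  have hhalf : Convex ℝ {x | univ.inf' univ_nonempty (fun i => dotR (p i) n) ≤ dotR x n} :=
    convex_halfSpace_ge ⟨fun a b => add_dotProduct a b n, fun c a => smul_dotProduct c a n⟩ _
  refine convexHull_min ?_ hhalf hx
  rintro _ ⟨i, rfl⟩
  exact inf'_le (fun i => dotR (p i) n) (mem_univ i)

def polarLatticePoints {d : ℕ} {ι : Type*} [Fintype ι] (v : Matrix ι (Fin d) ℤ) :
    Set (Fin d → ℝ) :=
  (fun n j => (n j : ℝ)) '' {n | ∀ i, -1 ≤ (v *ᵥ n) i}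

theorem zero_mem_polarLatticePoints {d : ℕ} {ι : Type*} [Fintype ι] (v : Matrix ι (Fin d) ℤ) :
    (0 : Fin d → ℝ) ∈ polarLatticePoints v :=
  ⟨0, fun i => by simp, by ext; simp⟩

section FineInterior

variable {d : ℕ} {ι : Type*} [Fintype ι] [Nonempty ι] {w : ι → ℕ} {v : Matrix ι (Fin d) ℤ}
  {Z : Matrix (Fin d) ι ℤ}

theorem ordP_convexHull_intCast (n : Fin d → ℤ) :
    ordP (convexHull ℝ (Set.range fun i j => (v i j : ℝ))) (fun j => (n j : ℝ)) =
      univ.inf' univ_nonempty fun i => ((v *ᵥ n) i : ℝ) := by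
  rw [ordP_convexHull_range]
  congr 1
  funext i
  simp [dotR, mulVec, dotProduct]

theorem ordP_convexHull_intCast_le (n : Fin d → ℤ) (i : ι) :
    ordP (convexHull ℝ (Set.range fun i j => (v i j : ℝ))) (fun j => (n j : ℝ)) ≤ (v *ᵥ n) i := by
  rw [ordP_convexHull_intCast]
  exact inf'_le _ (mem_univ i)

theorem neg_one_le_ordP_convexHull_intCast {n : Fin d → ℤ} (hn : ∀ i, -1 ≤ (v *ᵥ n) i) :
    -1 ≤ ordP (convexHull ℝ (Set.range fun i j => (v i j : ℝ))) (fun j => (n j : ℝ)) := by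
  rw [ordP_convexHull_intCast]
  exact le_inf' _ _ fun i _ => by exact_mod_cast hn i

theorem ordP_convexHull_intCast_le_neg_one (hw : ∀ i, 0 < w i)
    (hwv : (fun i => (w i : ℤ)) ᵥ* v = 0) (hZ : Z * v = 1) {n : Fin d → ℤ} (hn : n ≠ 0) :
    ordP (convexHull ℝ (Set.range fun i j => (v i j : ℝ))) (fun j => (n j : ℝ)) ≤ -1 := by
  obtain ⟨i, hi⟩ := exists_mulVec_neg_of_ne_zero hZ (fun i => by exact_mod_cast hw i) hwv hn
  exact (ordP_convexHull_intCast_le n i).trans (by exact_mod_cast Int.le_sub_one_of_lt hi)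

theorem zero_mem_fineInterior_convexHull (hw : ∀ i, 0 < w i)
    (hwv : (fun i => (w i : ℤ)) ᵥ* v = 0) (hZ : Z * v = 1) :
    0 ∈ fineInterior (convexHull ℝ (Set.range fun i j => (v i j : ℝ))) := fun n hn => by
  simp only [dotR, Pi.zero_apply, zero_mul, sum_const_zero]
  linarith [ordP_convexHull_intCast_le_neg_one hw hwv hZ hn]

theorem dotProduct_nonneg_of_mem_fineInterior {x : Fin d → ℝ}
    (hx : x ∈ fineInterior (convexHull ℝ (Set.range fun i j => (v i j : ℝ)))) :
    ∀ y ∈ polarLatticePoints v, 0 ≤ x ⬝ᵥ y := by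
  rintro _ ⟨n, hn, rfl⟩
  by_cases h0 : n = 0
  · simp [h0]
  · show 0 ≤ dotR x fun j => (n j : ℝ)
    linarith [hx n h0, neg_one_le_ordP_convexHull_intCast hn]

theorem exists_smul_mem_fineInterior (hw : ∀ i, 0 < w i)
    (hwv : (fun i => (w i : ℤ)) ᵥ* v = 0) (hZ : Z * v = 1) {x : Fin d → ℝ}
    (hx : ∀ y ∈ polarLatticePoints v, 0 ≤ x ⬝ᵥ y) :
    ∃ ε : ℝ, 0 < ε ∧ ε • x ∈ fineInterior (convexHull ℝ (Set.range fun i j => (v i j : ℝ))) := by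
  set K := (∑ i, |(x ᵥ* Z.map ((↑) : ℤ → ℝ)) i|) * ∑ i, (w i : ℝ)
  -- Off the polar lattice points `ord n ≤ -2`, while `|⟨x, n⟩| ≤ K · (-ord n)` everywhere.
  set ε : ℝ := (2 * (K + 1))⁻¹
  have hε : 0 < ε := by positivity
  refine ⟨ε, hε, fun n hn => ?_⟩
  have hεK : ε * K ≤ 1 / 2 := by
    rw [inv_mul_le_iff₀ (by positivity)]; linarith
  set o := ordP (convexHull ℝ (Set.range fun i j => (v i j : ℝ))) (fun j => (n j : ℝ))
  rw [show dotR (ε • x) _ = ε * (x ⬝ᵥ fun j => (n j : ℝ)) from smul_dotProduct _ _ _]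
  by_cases hP : ∀ i, -1 ≤ (v *ᵥ n) i
  · nlinarith [hx _ ⟨n, hP, rfl⟩, ordP_convexHull_intCast_le_neg_one hw hwv hZ hn]
  · push Not at hP
    obtain ⟨i, hi⟩ := hP
    have ho2 : o ≤ -2 :=
      (ordP_convexHull_intCast_le n i).trans (by exact_mod_cast Int.le_sub_one_of_lt hi)
    have hbound := abs_dotProduct_le_of_neg_le_mulVec (map_intCast_mul_eq_one hZ)
      (fun i => by exact_mod_cast hw i) (natCast_vecMul_map_eq_zero hwv) x (m := -o) fun i => by
        rw [neg_neg, map_intCast_mulVec]; exact ordP_convexHull_intCast_le n i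
    rw [← mul_assoc] at hbound
    nlinarith [neg_abs_le (x ⬝ᵥ fun j => (n j : ℝ)), mul_le_mul_of_nonneg_left hbound hε.le]

theorem fineInterior_convexHull_eq_singleton_zero_iff (hw : ∀ i, 0 < w i)
    (hwv : (fun i => (w i : ℤ)) ᵥ* v = 0) (hZ : Z * v = 1) :
    fineInterior (convexHull ℝ (Set.range fun i j => (v i j : ℝ))) = {0} ↔
      ∀ x : Fin d → ℝ, (∀ y ∈ polarLatticePoints v, 0 ≤ x ⬝ᵥ y) → x = 0 := by
  constructor
  · intro hF x hx
    obtain ⟨ε, hε, hεx⟩ := exists_smul_mem_fineInterior hw hwv hZ hx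
    rw [hF, Set.mem_singleton_iff, smul_eq_zero] at hεx
    exact hεx.resolve_left hε.ne'
  · intro hC
    exact Set.eq_singleton_iff_unique_mem.2 ⟨zero_mem_fineInterior_convexHull hw hwv hZ,
      fun x hx => hC x (dotProduct_nonneg_of_mem_fineInterior hx)⟩

end FineInterior

def weightLatticePoints {ι : Type*} [Fintype ι] (w : ι → ℕ) : Set (ι → ℝ) :=
  {x | ∃ u : ι → ℕ, (∀ i, x i = (u i : ℝ)) ∧ ∑ i, w i * u i = ∑ i, w i}

theorem image_polarLatticePoints {d : ℕ} {ι : Type*} [Fintype ι] [DecidableEq ι] {w : ι → ℕ}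
    {v : Matrix ι (Fin d) ℤ} {Z : Matrix (Fin d) ι ℤ} (hw : ∀ i, 0 < w i)
    (hwv : (fun i => (w i : ℤ)) ᵥ* v = 0) (hZ : Z * v = 1) (hcard : Fintype.card ι = d + 1) :
    (fun y => v.map ((↑) : ℤ → ℝ) *ᵥ y + 1) '' polarLatticePoints v = weightLatticePoints w := by
  ext x
  constructor
  · rintro ⟨_, ⟨n, hn, rfl⟩, rfl⟩
    have hnonneg i : 0 ≤ (v *ᵥ n) i + 1 := by linarith [hn i]
    refine ⟨fun i => ((v *ᵥ n) i + 1).toNat, fun i => ?_, ?_⟩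
    · dsimp only
      rw [Pi.add_apply, map_intCast_mulVec]
      rw [← Int.cast_natCast, Int.toNat_of_nonneg (hnonneg i), Int.cast_add, Int.cast_one]
      rfl
    · have hwn : ∑ i, (w i : ℤ) * (v *ᵥ n) i = 0 := by
        rw [← dotProduct, dotProduct_mulVec, hwv, zero_dotProduct]
      apply Nat.cast_injective (R := ℤ)
      push_cast
      simp only [Int.toNat_of_nonneg (hnonneg _), mul_add, mul_one, sum_add_distrib, hwn, zero_add]
  · rintro ⟨u, hxu, hsum⟩
    set a : ι → ℤ := fun i => u i - 1
    have ha : (fun i => (w i : ℤ)) ⬝ᵥ a = 0 := by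
      have : (∑ i, (w i : ℤ) * u i) = ∑ i, (w i : ℤ) := by exact_mod_cast hsum
      simp only [dotProduct, a, mul_sub, mul_one, sum_sub_distrib, this, sub_self]
    obtain ⟨i₀⟩ : Nonempty ι := Fintype.card_pos_iff.1 (hcard ▸ d.succ_pos)
    have hva : v *ᵥ (Z *ᵥ a) = a := mulVec_mulVec_eq_self_of_natCast_dotProduct_eq_zero hZ hwv
      (fun h => (hw i₀).ne' (congrFun h i₀)) (by simp [hcard]) ha
    refine ⟨_, ⟨Z *ᵥ a, fun i => ?_, rfl⟩, ?_⟩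
    · simp [hva, a]
      omega
    · funext i
      dsimp only
      rw [Pi.add_apply, map_intCast_mulVec, hva, hxu]
      simp [a]

theorem zero_mem_interior_convexHull_polarLatticePoints_iff_hasIP {d : ℕ} {w : Fin (d + 1) → ℕ}
    {v : Matrix (Fin (d + 1)) (Fin d) ℤ} {Z : Matrix (Fin d) (Fin (d + 1)) ℤ}
    (hw : ∀ i, 0 < w i) (hwv : (fun i => (w i : ℤ)) ᵥ* v = 0) (hZ : Z * v = 1) :
    (0 : Fin d → ℝ) ∈ interior (convexHull ℝ (polarLatticePoints v)) ↔ HasIP w := by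
  let A : (Fin d → ℝ) →ᵃ[ℝ] (Fin (d + 1) → ℝ) :=
    (v.map ((↑) : ℤ → ℝ)).mulVecLin.toAffineMap + AffineMap.const ℝ _ 1
  have hAapply : ⇑A = fun y => v.map ((↑) : ℤ → ℝ) *ᵥ y + 1 := rfl
  have hA : Injective A := fun y y' h => by
    have h' : v.map ((↑) : ℤ → ℝ) *ᵥ y = v.map (↑) *ᵥ y' := by simpa [hAapply] using h
    simpa [mulVec_mulVec, map_intCast_mul_eq_one hZ] using congrArg (Z.map ((↑) : ℤ → ℝ) *ᵥ ·) h'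
  have hhull : convexHull ℝ (weightLatticePoints w) = A '' convexHull ℝ (polarLatticePoints v) := by
    rw [← image_polarLatticePoints hw hwv hZ (Fintype.card_fin _), ← hAapply,
      AffineMap.image_convexHull]
  have hA0 : A 0 = fun _ => 1 := by simp [hAapply]; rfl
  change _ ↔ Module.finrank ℝ (affineSpan ℝ (convexHull ℝ (weightLatticePoints w))).direction = d ∧
    _ ∈ intrinsicInterior ℝ (convexHull ℝ (weightLatticePoints w))
  rw [hhull, AffineMap.finrank_direction_affineSpan_image_of_injective hA,
    AffineMap.intrinsicInterior_image_of_injective hA, ← hA0, hA.mem_set_image,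
    mem_interior_iff_finrank_direction_and_mem_intrinsicInterior,
    Module.finrank_fin_fun]

/-- Let `w̄` be a weight vector and `v_0,…,v_d ∈ ℤ^d` generate `ℤ^d` and
satisfy `Σ w_i v_i = 0`; set `Δ*_{w̄} = conv(v_0,…,v_d)`. Then the Fine interior
`F(Δ*_{w̄})` equals `{0}` if and only if `w̄` has the IP-property. -/
theorem stmt_3 (d : ℕ) (w : Fin (d + 1) → ℕ) (hw : ∀ i, 0 < w i)
    (v : Fin (d + 1) → (Fin d → ℤ))
    (hgen : AddSubgroup.closure (Set.range v) = ⊤)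
    (hrel : ∑ i, (w i : ℤ) • v i = 0) :
    fineInterior (convexHull ℝ (Set.range fun i => fun j => ((v i j : ℤ) : ℝ))) = {0} ↔
      HasIP w := by
  obtain ⟨Z, hZ⟩ := Matrix.exists_mul_eq_one_of_closure_range_eq_top v hgen
  have hwv : (fun i => (w i : ℤ)) ᵥ* v = 0 := (vecMul_eq_sum _ _).trans hrel
  rw [fineInterior_convexHull_eq_singleton_zero_iff hw hwv hZ,
    ← zero_mem_interior_convexHull_iff_dotProduct (zero_mem_polarLatticePoints v),
    zero_mem_interior_convexHull_polarLatticePoints_iff_hasIP hw hwv hZ]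
end

section
/- Let w̄ = (w_0,…,w_d) be a weight vector, w := Σ_i w_i, q_i := w_i/w, and let l be an integer; set S := {i ∈ {0,…,d} : θ̃_i(l) = 0}. Then for all real numbers u, v > 0 with uv ≠ 1, the following identity of real numbers holds (all powers being real powers of positive reals): ∏_{i∈S} (1−(uv)^{1−q_i})/(1−(uv)^{q_i}) · ∏_{i∉S} (uv)^{1/2−q_i}·(u/v)^{θ̃_i(l)−1/2} = (uv)^{−1} · ∏_{i∈S} ((uv)^{q_i}−uv)/(1−(uv)^{q_i}) · v^{size(l)} · (u/v)^{age(l)}. (This is the identity of the l-th summand underlying Proposition 5.1, which rewrites the summands of Vafa's orbifold Poincaré polynomial Q(u,v); note Σ_i q_i = 1 is used.) -/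
open scoped Classical

/-- `q_i = w_i / w`. -/
noncomputable def qwt {d : ℕ} (w : Fin (d + 1) → ℕ) (i : Fin (d + 1)) : ℝ :=
  (w i : ℝ) / ((∑ j, w j : ℕ) : ℝ)

/-- `θ̃_i(l)`, the fractional part of `l·q_i`. -/
noncomputable def thetaT {d : ℕ} (w : Fin (d + 1) → ℕ) (l : ℤ) (i : Fin (d + 1)) : ℝ :=
  Int.fract ((l : ℝ) * qwt w i)

/-- `age(l) = Σ_i θ̃_i(l)`. -/
noncomputable def ageW {d : ℕ} (w : Fin (d + 1) → ℕ) (l : ℤ) : ℝ :=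
  ∑ i, thetaT w l i

/-- `size(l) = #{i : θ̃_i(l) ≠ 0}`. -/
noncomputable def sizeW {d : ℕ} (w : Fin (d + 1) → ℕ) (l : ℤ) : ℕ :=
  (Finset.univ.filter fun i => thetaT w l i ≠ 0).card

/-!
Every factor on the left splits off `(uv) ^ (-qᵢ)`: for `i ∈ S` because
`1 - x ^ (1 - q) = x ^ (-q) (x ^ q - x)`, and for `i ∉ S` because
`(uv) ^ (1/2) (u/v) ^ (-1/2) = v`. As `∑ qᵢ = 1`, these split-off factors multiply to `(uv)⁻¹`,
and the remaining factors `v (u/v) ^ θ̃ᵢ(l)`, `i ∉ S`, multiply to `v ^ size(l) (u/v) ^ age(l)`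
because `θ̃ᵢ(l)` vanishes on `S`.
-/

open Finset

theorem sum_qwt_eq_one {d : ℕ} (w : Fin (d + 1) → ℕ) (hw : ∑ j, w j ≠ 0) :
    ∑ i, qwt w i = 1 := by
  unfold qwt
  rw [← sum_div, ← Nat.cast_sum]
  exact div_self (Nat.cast_ne_zero.mpr hw)

theorem sum_compl_thetaT_eq_ageW {d : ℕ} (w : Fin (d + 1) → ℕ) (l : ℤ) :
    ∑ i ∈ (univ.filter fun i => thetaT w l i = 0)ᶜ, thetaT w l i = ageW w l := by
  rw [ageW, ← sum_add_sum_compl (univ.filter fun i => thetaT w l i = 0),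
    sum_eq_zero fun i hi => (mem_filter.mp hi).2, zero_add]

theorem card_compl_eq_sizeW {d : ℕ} (w : Fin (d + 1) → ℕ) (l : ℤ) :
    #(univ.filter fun i => thetaT w l i = 0)ᶜ = sizeW w l := by
  rw [sizeW, compl_filter]

namespace Real

theorem one_sub_rpow_one_sub_div {x : ℝ} (hx : 0 < x) (q : ℝ) :
    (1 - x ^ (1 - q)) / (1 - x ^ q) = x ^ (-q) * ((x ^ q - x) / (1 - x ^ q)) := by
  have hxq : x ^ (-q) * x ^ q = 1 := by rw [← rpow_add hx, neg_add_cancel, rpow_zero]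
  rw [sub_eq_add_neg 1 q, rpow_add hx, rpow_one, ← mul_div_assoc]
  congr 1
  linear_combination -hxq

theorem mul_rpow_half_sub_mul_div_rpow_sub_half {u v : ℝ} (hu : 0 < u) (hv : 0 < v) (q t : ℝ) :
    (u * v) ^ ((1 : ℝ) / 2 - q) * (u / v) ^ (t - 1 / 2) =
      (u * v) ^ (-q) * (v * (u / v) ^ t) := by
  have hhalf : (u * v) ^ ((1 : ℝ) / 2) = v * (u / v) ^ ((1 : ℝ) / 2) := by
    rw [← sqrt_eq_rpow, ← sqrt_eq_rpow, sqrt_div' u hv.le, sqrt_mul hu.le]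
    field_simp
    exact sq_sqrt hv.le
  have hdiv : 0 < u / v := div_pos hu hv
  rw [sub_eq_neg_add (1 / 2 : ℝ), sub_eq_add_neg t, rpow_add (mul_pos hu hv), rpow_add hdiv,
    rpow_neg hdiv.le, hhalf]
  field_simp [(rpow_pos_of_pos hdiv (1 / 2)).ne']

theorem prod_rpow_neg_mul_prod_compl {ι : Type*} [Fintype ι] [DecidableEq ι] (S : Finset ι)
    {x : ℝ} (hx : 0 < x) {q : ι → ℝ} (hq : ∑ i, q i = 1) (a b : ι → ℝ) :
    (∏ i ∈ S, x ^ (-q i) * a i) * ∏ i ∈ Sᶜ, x ^ (-q i) * b i =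
      x⁻¹ * (∏ i ∈ S, a i) * ∏ i ∈ Sᶜ, b i := by
  have hinv : x ^ (∑ i ∈ S, -q i) * x ^ (∑ i ∈ Sᶜ, -q i) = x⁻¹ := by
    rw [← rpow_add hx, sum_add_sum_compl, sum_neg_distrib, hq, rpow_neg_one]
  rw [prod_mul_distrib, prod_mul_distrib, ← rpow_sum_of_pos hx, ← rpow_sum_of_pos hx, ← hinv]
  ring

end Real

theorem stmt_4_general {d : ℕ} (w : Fin (d + 1) → ℕ) (hw : ∀ i, 0 < w i) (l : ℤ)
    (u v : ℝ) (hu : 0 < u) (hv : 0 < v) :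
    (∏ i ∈ Finset.univ.filter fun i => thetaT w l i = 0,
        (1 - (u * v) ^ (1 - qwt w i)) / (1 - (u * v) ^ qwt w i)) *
      ∏ i ∈ (Finset.univ.filter fun i => thetaT w l i = 0)ᶜ,
        (u * v) ^ ((1 : ℝ) / 2 - qwt w i) * (u / v) ^ (thetaT w l i - 1 / 2) =
    (u * v)⁻¹ *
      (∏ i ∈ Finset.univ.filter fun i => thetaT w l i = 0,
        ((u * v) ^ qwt w i - u * v) / (1 - (u * v) ^ qwt w i)) *
      v ^ (sizeW w l) * (u / v) ^ ageW w l := by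
  have huv : 0 < u * v := mul_pos hu hv
  have hq : ∑ i, qwt w i = 1 :=
    sum_qwt_eq_one w (sum_pos (fun i _ => hw i) univ_nonempty).ne'
  simp_rw [Real.one_sub_rpow_one_sub_div huv, Real.mul_rpow_half_sub_mul_div_rpow_sub_half hu hv,
    Real.prod_rpow_neg_mul_prod_compl _ huv hq, prod_mul_distrib, prod_const,
    ← Real.rpow_sum_of_pos (div_pos hu hv), sum_compl_thetaT_eq_ageW, card_compl_eq_sizeW]
  ring

/-- for all reals `u, v > 0` with `uv ≠ 1`, with
`S = {i : θ̃_i(l) = 0}`: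
`∏_{i∈S} (1−(uv)^{1−q_i})/(1−(uv)^{q_i}) · ∏_{i∉S} (uv)^{1/2−q_i}·(u/v)^{θ̃_i(l)−1/2}
 = (uv)^{−1} · ∏_{i∈S} ((uv)^{q_i}−uv)/(1−(uv)^{q_i}) · v^{size(l)} · (u/v)^{age(l)}`. -/
theorem stmt_4 {d : ℕ} (w : Fin (d + 1) → ℕ) (hw : ∀ i, 0 < w i) (l : ℤ)
    (u v : ℝ) (hu : 0 < u) (hv : 0 < v) (huv : u * v ≠ 1) :
    (∏ i ∈ Finset.univ.filter fun i => thetaT w l i = 0,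
        (1 - (u * v) ^ (1 - qwt w i)) / (1 - (u * v) ^ qwt w i)) *
      ∏ i ∈ (Finset.univ.filter fun i => thetaT w l i = 0)ᶜ,
        (u * v) ^ ((1 : ℝ) / 2 - qwt w i) * (u / v) ^ (thetaT w l i - 1 / 2) =
    (u * v)⁻¹ *
      (∏ i ∈ Finset.univ.filter fun i => thetaT w l i = 0,
        ((u * v) ^ qwt w i - u * v) / (1 - (u * v) ^ qwt w i)) *
      v ^ (sizeW w l) * (u / v) ^ ageW w l :=
  stmt_4_general w hw l u v hu hv
end
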